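/- Let K be an algebraically closed field with a nontrivial non-archimedean absolute value. Then the homogeneous transfinite diameter of the closed unit ball B(0,1) ⊂ K^{N+1} equals 1; moreover, any bounded infinite set E containing B(0,1) has d_∞(E) ≥ 1. -/

import Mathlib

/-!
For the unit ball, `d_M ≤ 1` is the ultrametric inequality: a determinant with entries of norm
at most `1` has norm at most `1`. Conversely, pick `u_1, …, u_M` of norm `1` with pairwise
distinct residues (possible because the residue field of an algebraically closed field is
infinite; concretely, a root of `∏ (X - t) - 1` is at distance `1` from every `t`), and take the
points `(u_i, u_i², …, u_i^{N+1})` of the unit ball. Every `(N+1)`-minor is `∏ u_j` times a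
Vandermonde determinant `∏ (u_j - u_i)`, hence a unit, so `Δ = 1`. Any bounded `E ⊇ B(0,1)`
contains these points, whence `d_M(E) ≥ 1` for every `M`.
-/

open scoped Classical in
/-- `Δ(s)` for a tuple `s` of `M` vectors in `K^{N+1}`: the product, over all
`(N+1)`-element subsets of the tuple (enumerated by strictly monotone index maps),
of the absolute value of the determinant of the matrix whose columns are these vectors.
(Taking absolute values makes the sign ambiguity irrelevant.) -/
noncomputable def absVandermonde {K : Type*} [NormedField K] {N M : ℕ}
    (s : Fin M → (Fin (N + 1) → K)) : ℝ :=
  ∏ t ∈ Finset.univ.filter (fun t : Fin (N + 1) → Fin M => StrictMono t),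
    ‖(Matrix.of fun i j => s (t j) i).det‖

/-- The `M`-diameter `d_M(E)` of a set `E ⊆ K^{N+1}`: the supremum of
`|Δ(S)|^(1/binom(M,N+1))` over all `M`-element subsets `S` of `E` (given by injective
`M`-tuples of elements of `E`); the exponent is the real number `(M.choose (N+1))⁻¹`. -/
noncomputable def mDiameter {K : Type*} [NormedField K] {N : ℕ}
    (E : Set (Fin (N + 1) → K)) (M : ℕ) : ℝ :=
  sSup {r : ℝ | ∃ s : Fin M → (Fin (N + 1) → K),
    Function.Injective s ∧ (∀ i, s i ∈ E) ∧
      r = absVandermonde s ^ ((M.choose (N + 1) : ℝ)⁻¹)}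

lemma Finset.eq_one_of_prod_eq_one_of_le_one {ι : Type*} {s : Finset ι} {f : ι → ℝ}
    (h0 : ∀ i ∈ s, 0 ≤ f i) (h1 : ∀ i ∈ s, f i ≤ 1) (hprod : ∏ i ∈ s, f i = 1)
    {i : ι} (hi : i ∈ s) : f i = 1 := by
  classical
  refine le_antisymm (h1 i hi) ?_
  calc 1 = f i * ∏ j ∈ s.erase i, f j := by rw [Finset.mul_prod_erase s f hi, hprod]
    _ ≤ f i := mul_le_of_le_one_right (h0 i hi)
        (Finset.prod_le_one (fun j hj => h0 j (Finset.mem_of_mem_erase hj))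
          fun j hj => h1 j (Finset.mem_of_mem_erase hj))

open Polynomial in
lemma exists_prod_sub_eq_one {K : Type*} [Field K] [IsAlgClosed K] {T : Finset K}
    (hT : T.Nonempty) : ∃ x : K, ∏ t ∈ T, (x - t) = 1 := by
  have hdeg : (∏ t ∈ T, (X - C t) - 1 : K[X]).degree ≠ 0 := by
    rw [degree_sub_eq_left_of_degree_lt] <;>
    simp [degree_prod, hT.ne_empty, Finset.card_pos.2 hT]
  obtain ⟨x, hx⟩ := IsAlgClosed.exists_root _ hdeg
  exact ⟨x, by simpa [eval_prod, sub_eq_zero] using hx⟩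

lemma Matrix.norm_det_le_pow {R n : Type*} [NormedCommRing R] [NormOneClass R]
    [IsUltrametricDist R] [Fintype n] [DecidableEq n] (A : Matrix n n R) {c : ℝ} (hc : 0 ≤ c)
    (hA : ∀ i j, ‖A i j‖ ≤ c) : ‖A.det‖ ≤ c ^ Fintype.card n := by
  rw [Matrix.det_apply]
  refine IsUltrametricDist.norm_sum_le_of_forall_le_of_nonneg (by positivity) fun σ _ => ?_
  have hsign : ‖Equiv.Perm.sign σ • ∏ i, A (σ i) i‖ = ‖∏ i, A (σ i) i‖ := by
    rcases Int.units_eq_one_or (Equiv.Perm.sign σ) with h | h <;> simp [h, Units.smul_def]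
  calc ‖Equiv.Perm.sign σ • ∏ i, A (σ i) i‖ ≤ ∏ i, ‖A (σ i) i‖ :=
        hsign.trans_le (Finset.norm_prod_le _ _)
    _ ≤ ∏ _i : n, c := Finset.prod_le_prod (fun _ _ => norm_nonneg _) fun i _ => hA _ _
    _ = c ^ Fintype.card n := by simp

section SeparatedPoints

variable {K : Type*} [NormedField K] [IsUltrametricDist K]

lemma exists_forall_norm_sub_eq_one [IsAlgClosed K] {T : Finset K} (hT : T.Nonempty)
    (hT1 : ∀ t ∈ T, ‖t‖ ≤ 1) : ∃ x : K, ∀ t ∈ T, ‖x - t‖ = 1 := by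
  obtain ⟨x, hx⟩ := exists_prod_sub_eq_one hT
  have hprod : ∏ t ∈ T, ‖x - t‖ = 1 := by rw [← norm_prod, hx, norm_one]
  have hx1 : ‖x‖ ≤ 1 := by
    by_contra! hgt
    have hfar : ∀ t ∈ T, ‖x - t‖ = ‖x‖ := fun t ht => by
      rw [sub_eq_add_neg, IsUltrametricDist.norm_add_eq_max_of_norm_ne_norm] <;>
        grind [norm_neg]
    rw [Finset.prod_congr rfl hfar, Finset.prod_const] at hprod
    exact (one_lt_pow₀ hgt (Finset.card_pos.2 hT).ne').ne' hprod
  have hle : ∀ t ∈ T, ‖x - t‖ ≤ 1 := fun t ht => by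
    simpa [sub_eq_add_neg] using
      (IsUltrametricDist.norm_add_le_max x (-t)).trans (by simpa using ⟨hx1, hT1 t ht⟩)
  exact ⟨x, fun t ht =>
    Finset.eq_one_of_prod_eq_one_of_le_one (fun _ _ => norm_nonneg _) hle hprod ht⟩

lemma exists_pairwise_norm_sub_eq_one [IsAlgClosed K] (n : ℕ) :
    ∃ u : Fin n → K, (∀ i, ‖u i‖ = 1) ∧ Pairwise fun i j => ‖u i - u j‖ = 1 := by
  classical
  induction n with
  | zero => exact ⟨Fin.elim0, fun i => i.elim0, fun i => i.elim0⟩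
  | succ n ih =>
    obtain ⟨u, hu, hsep⟩ := ih
    -- putting `0` into `T` makes the new point a unit
    obtain ⟨x, hx⟩ := exists_forall_norm_sub_eq_one (T := insert 0 (Finset.univ.image u))
      (Finset.insert_nonempty _ _) (by simp [hu])
    have hx0 : ‖x‖ = 1 := by simpa using hx 0 (Finset.mem_insert_self _ _)
    have hxu : ∀ i, ‖x - u i‖ = 1 := fun i => hx _ (by simp)
    refine ⟨Fin.cons x u, Fin.cases hx0 hu, fun i j hij => ?_⟩
    cases i using Fin.cases <;> cases j using Fin.cases
    · exact absurd rfl hij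
    · exact hxu _
    · simpa [norm_sub_rev] using hxu _
    · exact hsep (fun h => hij (congrArg Fin.succ h))

end SeparatedPoints

section TransfiniteDiameter

variable {K : Type*} [NormedField K] {N M : ℕ}

lemma absVandermonde_nonneg (s : Fin M → (Fin (N + 1) → K)) : 0 ≤ absVandermonde s :=
  Finset.prod_nonneg fun _ _ => norm_nonneg _

lemma absVandermonde_le [IsUltrametricDist K] {c : ℝ} (hc : 1 ≤ c)
    {s : Fin M → (Fin (N + 1) → K)} (hs : ∀ i, ‖s i‖ ≤ c) :
    absVandermonde s ≤ c ^ ((N + 1) * M ^ (N + 1)) := by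
  classical
  set T := Finset.univ.filter fun t : Fin (N + 1) → Fin M => StrictMono t
  calc absVandermonde s ≤ ∏ _t ∈ T, c ^ (N + 1) := by
        refine Finset.prod_le_prod (fun _ _ => norm_nonneg _) fun t _ => ?_
        simpa using Matrix.norm_det_le_pow (Matrix.of fun i j => s (t j) i) (zero_le_one.trans hc)
          fun i j => (norm_le_pi_norm (s (t j)) i).trans (hs (t j))
    _ = c ^ ((N + 1) * T.card) := by rw [Finset.prod_const, pow_mul]
    _ ≤ c ^ ((N + 1) * M ^ (N + 1)) := by
        gcongr
        simpa [T] using Finset.card_filter_le (Finset.univ : Finset (Fin (N + 1) → Fin M)) _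

lemma absVandermonde_pow_succ_eq_one {u : Fin M → K} (hu : ∀ i, ‖u i‖ = 1)
    (hsep : Pairwise fun i j => ‖u i - u j‖ = 1) :
    absVandermonde (N := N) (fun i j => u i ^ ((j : ℕ) + 1)) = 1 := by
  refine Finset.prod_eq_one fun t ht => ?_
  have ht : StrictMono t := (Finset.mem_filter.mp ht).2
  have hA : (Matrix.of fun (i j : Fin (N + 1)) => u (t j) ^ ((i : ℕ) + 1)) =
      Matrix.of fun i j => u (t j) * (Matrix.vandermonde (u ∘ t)).transpose i j := by
    ext i j
    simp [pow_succ, mul_comm]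
  rw [hA, Matrix.det_mul_row, Matrix.det_transpose, Matrix.det_vandermonde]
  simp only [norm_mul, norm_prod, Function.comp_apply, hu, Finset.prod_const_one, one_mul]
  exact Finset.prod_eq_one fun i _ => Finset.prod_eq_one fun j hj =>
    hsep (ht (Finset.mem_Ioi.mp hj)).ne'

lemma exists_injective_absVandermonde_eq_one [IsUltrametricDist K] [IsAlgClosed K] :
    ∃ s : Fin M → (Fin (N + 1) → K),
      Function.Injective s ∧ (∀ i, ‖s i‖ ≤ 1) ∧ absVandermonde s = 1 := by
  obtain ⟨u, hu, hsep⟩ := exists_pairwise_norm_sub_eq_one (K := K) M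
  refine ⟨fun i j => u i ^ ((j : ℕ) + 1), fun a b hab => ?_, fun i => ?_,
    absVandermonde_pow_succ_eq_one hu hsep⟩
  · by_contra hne
    simpa [show u a = u b by simpa using congrFun hab 0] using hsep hne
  · simp [pi_norm_le_iff_of_nonneg, hu]

lemma rpow_absVandermonde_le [IsUltrametricDist K] {c : ℝ} (hc : 1 ≤ c)
    {s : Fin M → (Fin (N + 1) → K)} (hs : ∀ i, ‖s i‖ ≤ c) :
    absVandermonde s ^ ((M.choose (N + 1) : ℝ)⁻¹) ≤ c ^ ((N + 1) * M ^ (N + 1)) :=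
  calc absVandermonde s ^ ((M.choose (N + 1) : ℝ)⁻¹)
      ≤ (c ^ ((N + 1) * M ^ (N + 1))) ^ ((M.choose (N + 1) : ℝ)⁻¹) :=
        Real.rpow_le_rpow (absVandermonde_nonneg s) (absVandermonde_le hc hs) (by positivity)
    _ ≤ c ^ ((N + 1) * M ^ (N + 1)) :=
        Real.rpow_le_self_of_one_le (one_le_pow₀ hc) (Nat.cast_inv_le_one _)

lemma mDiameter_le [IsUltrametricDist K] {E : Set (Fin (N + 1) → K)} {c : ℝ} (hc : 1 ≤ c)
    (hE : ∀ x ∈ E, ‖x‖ ≤ c) : mDiameter E M ≤ c ^ ((N + 1) * M ^ (N + 1)) := by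
  refine Real.sSup_le ?_ (by positivity)
  rintro _ ⟨s, -, hsE, rfl⟩
  exact rpow_absVandermonde_le hc fun i => hE _ (hsE i)

lemma le_mDiameter [IsUltrametricDist K] {E : Set (Fin (N + 1) → K)} {c : ℝ} (hc : 1 ≤ c)
    (hE : ∀ x ∈ E, ‖x‖ ≤ c) {s : Fin M → (Fin (N + 1) → K)} (hs : Function.Injective s)
    (hsE : ∀ i, s i ∈ E) : absVandermonde s ^ ((M.choose (N + 1) : ℝ)⁻¹) ≤ mDiameter E M := by
  refine le_csSup ⟨c ^ ((N + 1) * M ^ (N + 1)), ?_⟩ ⟨s, hs, hsE, rfl⟩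
  rintro _ ⟨s, -, hsE, rfl⟩
  exact rpow_absVandermonde_le hc fun i => hE _ (hsE i)

lemma one_le_mDiameter [IsUltrametricDist K] [IsAlgClosed K] {E : Set (Fin (N + 1) → K)}
    (hE : ∃ B : ℝ, ∀ x ∈ E, ‖x‖ ≤ B) (hball : {x | ‖x‖ ≤ 1} ⊆ E) : 1 ≤ mDiameter E M := by
  obtain ⟨B, hB⟩ := hE
  obtain ⟨s, hs, hs1, hΔ⟩ := exists_injective_absVandermonde_eq_one (K := K) (N := N) (M := M)
  simpa [hΔ] using le_mDiameter (le_max_right B 1) (fun x hx => (hB x hx).trans (le_max_left _ _))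
    hs fun i => hball (hs1 i)

lemma mDiameter_closedBall_eq_one [IsUltrametricDist K] [IsAlgClosed K] :
    mDiameter {x : Fin (N + 1) → K | ‖x‖ ≤ 1} M = 1 :=
  le_antisymm (by simpa using mDiameter_le (E := {x | ‖x‖ ≤ 1}) le_rfl fun _ hx => hx)
    (one_le_mDiameter ⟨1, fun _ hx => hx⟩ subset_rfl)

end TransfiniteDiameter

/-- Let `K` be an algebraically closed field with a nontrivial non-archimedean absolute value.
Then the homogeneous transfinite diameter of the closed unit ball `B(0,1) ⊆ K^{N+1}` equals `1`
(the sequence `d_M(B(0,1))` converges to `1`); moreover any bounded infinite set `E` containing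
`B(0,1)` has `d_∞(E) ≥ 1`. -/
theorem stmt_16 {K : Type*} [NontriviallyNormedField K] [IsUltrametricDist K] [IsAlgClosed K]
    {N : ℕ} :
    Filter.Tendsto (fun M => mDiameter {x : Fin (N + 1) → K | ‖x‖ ≤ 1} M)
      Filter.atTop (nhds 1) ∧
    ∀ (E : Set (Fin (N + 1) → K)) (L : ℝ), E.Infinite → (∃ B : ℝ, ∀ x ∈ E, ‖x‖ ≤ B) →
      {x : Fin (N + 1) → K | ‖x‖ ≤ 1} ⊆ E →
      Filter.Tendsto (fun M => mDiameter E M) Filter.atTop (nhds L) → 1 ≤ L := by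
  refine ⟨?_, fun E L _ hbdd hball hL => ge_of_tendsto' hL fun M => one_le_mDiameter hbdd hball⟩
  simp only [mDiameter_closedBall_eq_one]
  exact tendsto_const_nhds
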